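/- arXiv:2604.22404 — 3 statements merged into one kernel-verified Lean document; each statement's English description precedes it below -/
import Mathlib

section
/- Let R be a root system and α a maximal positive root. Set R⁺_α = {γ ∈ R⁺ : (α, γ) > 0}. If β, γ ∈ R⁺_α with β ≠ γ and β + γ a sum equal to α, then for any δ ∈ R⁺_α with δ ≠ α, the element α - δ also lies in R⁺_α; i.e. the map δ ↦ α - δ is an involution of R⁺_α \ {α}. -/
/-!
Since `⟪α, δ⟫ > 0` and `δ ≠ ±α`, strict Cauchy–Schwarz bounds the product of the two Cartan
integers of `α` and `δ` by `3`, so one of them is `1` and a reflection shows that `α - δ` is a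
root. It is positive, for otherwise `α + (δ - α) = δ` would contradict the maximality of `α`.
Finally `⟪α, α - δ⟫ > 0`, since otherwise `α + (α - δ)` would be a root.
-/

open scoped RealInnerProductSpace

theorem real_inner_mul_inner_self_lt {F : Type*} [NormedAddCommGroup F] [InnerProductSpace ℝ F]
    {x y : F} (hx : x ≠ 0) (hy : ∀ r : ℝ, y ≠ r • x) :
    ⟪x, y⟫ * ⟪x, y⟫ < ⟪x, x⟫ * ⟪y, y⟫ := by
  refine (real_inner_mul_inner_self_le x y).lt_of_ne fun h => ?_
  have hy₀ : y ≠ 0 := by simpa using hy 0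
  rw [real_inner_self_eq_norm_mul_norm, real_inner_self_eq_norm_mul_norm] at h
  have habs : |⟪x, y⟫| = ‖x‖ * ‖y‖ :=
    (pow_left_inj₀ (abs_nonneg _) (by positivity) two_ne_zero).1 (by rw [sq_abs]; linarith)
  obtain ⟨r, -, hr⟩ := (norm_inner_eq_norm_iff (𝕜 := ℝ) hx hy₀).1 habs
  exact hy r hr

theorem sub_mem_of_forall_add_notMem {E : Type*} [AddCommGroup E] {R P : Finset E}
    (hPneg : ∀ β ∈ R, (β ∈ P ↔ -β ∉ P)) {α : E} (hmax : ∀ γ ∈ P, α + γ ∉ R)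
    {x : E} (hx : x ∈ R) (hsub : α - x ∈ R) :
    α - x ∈ P := by
  by_contra hnot
  have hneg : x - α ∈ P := by simpa using (not_congr (hPneg _ hsub)).1 hnot
  exact hmax _ hneg (by simpa using hx)

section RootSystem

variable {E : Type*} [NormedAddCommGroup E] [InnerProductSpace ℝ E] {R : Finset E}

theorem ne_smul_of_inner_pos (hRred : ∀ α ∈ R, ∀ t : ℝ, t • α ∈ R → t = 1 ∨ t = -1)
    {x y : E} (hx : x ∈ R) (hy : y ∈ R) (hxy : x ≠ y) (hpos : 0 < ⟪x, y⟫) :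
    ∀ r : ℝ, y ≠ r • x := by
  rintro r rfl
  rcases hRred x hx r hy with rfl | rfl
  · exact hxy (one_smul ℝ x).symm
  · rw [inner_smul_right] at hpos
    nlinarith [real_inner_self_nonneg (x := x)]

theorem sub_mem_of_inner_pos (hRneg : ∀ β ∈ R, -β ∈ R)
    (hRint : ∀ α ∈ R, ∀ β ∈ R, ∃ n : ℤ, 2 * ⟪β, α⟫ / ⟪α, α⟫ = (n : ℝ))
    (hRrefl : ∀ α ∈ R, ∀ β ∈ R, β - (2 * ⟪β, α⟫ / ⟪α, α⟫) • α ∈ R)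
    (hRred : ∀ α ∈ R, ∀ t : ℝ, t • α ∈ R → t = 1 ∨ t = -1)
    {x y : E} (hx : x ∈ R) (hy : y ∈ R) (hxy : x ≠ y) (hpos : 0 < ⟪x, y⟫) :
    x - y ∈ R := by
  have hxx : 0 < ⟪x, x⟫ := real_inner_self_pos.2 fun h => by simp [h] at hpos
  have hyy : 0 < ⟪y, y⟫ := real_inner_self_pos.2 fun h => by simp [h] at hpos
  obtain ⟨m, hm⟩ := hRint x hx y hy
  obtain ⟨n, hn⟩ := hRint y hy x hx
  rw [real_inner_comm] at hm
  have hm_pos : 0 < m := by exact_mod_cast hm ▸ (by positivity : (0 : ℝ) < 2 * ⟪x, y⟫ / ⟪x, x⟫)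
  have hn_pos : 0 < n := by exact_mod_cast hn ▸ (by positivity : (0 : ℝ) < 2 * ⟪x, y⟫ / ⟪y, y⟫)
  have hmn : m * n < 4 := by
    have hCS := real_inner_mul_inner_self_lt (fun h => by simp [h] at hpos)
      (ne_smul_of_inner_pos hRred hx hy hxy hpos)
    have : (m : ℝ) * n < 4 := by
      rw [← hm, ← hn, div_mul_div_comm, div_lt_iff₀ (by positivity)]
      linarith
    exact_mod_cast this
  have hone : m = 1 ∨ n = 1 := by
    by_contra! h
    have hm₂ : 2 ≤ m := by omega
    have hn₂ : 2 ≤ n := by omega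
    nlinarith
  rcases hone with rfl | rfl
  · have hyx := hRrefl x hx y hy
    rw [real_inner_comm, hm, Int.cast_one, one_smul] at hyx
    simpa using hRneg _ hyx
  · have hxy := hRrefl y hy x hx
    rwa [hn, Int.cast_one, one_smul] at hxy

/-- Equality would make `s_α x = x - 2α` a root, and the strict reverse inequality makes `x - α`
a root at an acute angle to `α`. -/
theorem inner_lt_inner_self_of_add_sub_notMem (hRneg : ∀ β ∈ R, -β ∈ R)
    (hRint : ∀ α ∈ R, ∀ β ∈ R, ∃ n : ℤ, 2 * ⟪β, α⟫ / ⟪α, α⟫ = (n : ℝ))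
    (hRrefl : ∀ α ∈ R, ∀ β ∈ R, β - (2 * ⟪β, α⟫ / ⟪α, α⟫) • α ∈ R)
    (hRred : ∀ α ∈ R, ∀ t : ℝ, t • α ∈ R → t = 1 ∨ t = -1)
    {α x : E} (hα : α ∈ R) (hx : x ∈ R) (hxα : x ≠ α) (hpos : 0 < ⟪α, x⟫)
    (hnot : α + (α - x) ∉ R) : ⟪α, x⟫ < ⟪α, α⟫ := by
  rcases lt_trichotomy ⟪α, x⟫ ⟪α, α⟫ with hlt | heq | hgt
  · exact hlt
  · have hαα : ⟪α, α⟫ ≠ 0 := heq ▸ hpos.ne'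
    have hrefl := hRrefl α hα x hx
    rw [real_inner_comm, heq, mul_div_cancel_right₀ _ hαα] at hrefl
    refine absurd ?_ hnot
    rw [show α + (α - x) = -(x - (2 : ℝ) • α) by rw [two_smul]; abel]
    exact hRneg _ hrefl
  · have hxα_mem : x - α ∈ R :=
      sub_mem_of_inner_pos hRneg hRint hRrefl hRred hx hα hxα (by rwa [real_inner_comm])
    have hαx : α ≠ x - α := by
      intro h
      have h2α : (2 : ℝ) • α ∈ R := by rwa [two_smul, ← sub_eq_iff_eq_add.mp h.symm]
      rcases hRred α hα 2 h2α with ht | ht <;> norm_num at ht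
    have hsub := sub_mem_of_inner_pos hRneg hRint hRrefl hRred hα hxα_mem hαx
      (by rw [inner_sub_right]; linarith)
    exact absurd (by rwa [sub_sub_eq_add_sub, add_sub_assoc] at hsub) hnot

end RootSystem

theorem stmt_4_general (E : Type*) [NormedAddCommGroup E] [InnerProductSpace ℝ E]
    (R : Finset E)
    (hRneg : ∀ β ∈ R, -β ∈ R)
    (hRint : ∀ α ∈ R, ∀ β ∈ R, ∃ n : ℤ, 2 * ⟪β, α⟫ / ⟪α, α⟫ = (n : ℝ))
    (hRrefl : ∀ α ∈ R, ∀ β ∈ R, β - (2 * ⟪β, α⟫ / ⟪α, α⟫) • α ∈ R)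
    (hRred : ∀ α ∈ R, ∀ t : ℝ, t • α ∈ R → t = 1 ∨ t = -1)
    (P : Finset E) (hPR : P ⊆ R)
    (hPneg : ∀ β ∈ R, (β ∈ P ↔ -β ∉ P))
    (α : E) (hα : α ∈ P)
    (hmax : ∀ γ ∈ P, α + γ ∉ R)
    (Rpα : Finset E) (hRpα : Rpα = P.filter (fun γ => 0 < ⟪α, γ⟫))
    (β γ : E) :
    ∀ δ ∈ Rpα, δ ≠ α → α - δ ∈ Rpα := by
  subst hRpα
  intro δ hδ hδα
  obtain ⟨hδP, hαδ⟩ := Finset.mem_filter.mp hδ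
  have hsubR : α - δ ∈ R :=
    sub_mem_of_inner_pos hRneg hRint hRrefl hRred (hPR hα) (hPR hδP) hδα.symm hαδ
  have hsubP : α - δ ∈ P := sub_mem_of_forall_add_notMem hPneg hmax (hPR hδP) hsubR
  have hlt : ⟪α, δ⟫ < ⟪α, α⟫ :=
    inner_lt_inner_self_of_add_sub_notMem hRneg hRint hRrefl hRred (hPR hα) (hPR hδP) hδα hαδ
      (hmax _ hsubP)
  exact Finset.mem_filter.mpr ⟨hsubP, by rw [inner_sub_right]; linarith⟩

/-- Let `α` be a highest root and `R⁺_α = {γ ∈ R⁺ : (α,γ) > 0}`.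
If `β, γ ∈ R⁺_α` with `β ≠ γ` and `β + γ = α`, then for every `δ ∈ R⁺_α` with
`δ ≠ α` also `α - δ ∈ R⁺_α`, i.e. `δ ↦ α - δ` is an involution of `R⁺_α \ {α}`. -/
theorem stmt_4 (E : Type*) [NormedAddCommGroup E] [InnerProductSpace ℝ E]
    (R : Finset E)
    (hR0 : (0 : E) ∉ R)
    (hRneg : ∀ β ∈ R, -β ∈ R)
    (hRint : ∀ α ∈ R, ∀ β ∈ R, ∃ n : ℤ, 2 * ⟪β, α⟫ / ⟪α, α⟫ = (n : ℝ))
    (hRrefl : ∀ α ∈ R, ∀ β ∈ R, β - (2 * ⟪β, α⟫ / ⟪α, α⟫) • α ∈ R)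
    (hRred : ∀ α ∈ R, ∀ t : ℝ, t • α ∈ R → t = 1 ∨ t = -1)
    (P : Finset E) (hPR : P ⊆ R)
    (hPneg : ∀ β ∈ R, (β ∈ P ↔ -β ∉ P))
    (hPadd : ∀ β ∈ P, ∀ γ ∈ P, β + γ ∈ R → β + γ ∈ P)
    (α : E) (hα : α ∈ P)
    (hmax : ∀ γ ∈ P, α + γ ∉ R)
    (Rpα : Finset E) (hRpα : Rpα = P.filter (fun γ => 0 < ⟪α, γ⟫))
    (β γ : E) (hβ : β ∈ Rpα) (hγ : γ ∈ Rpα) (hβγ : β ≠ γ) (hsum : β + γ = α) :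
    ∀ δ ∈ Rpα, δ ≠ α → α - δ ∈ Rpα :=
  stmt_4_general E R hRneg hRint hRrefl hRred P hPR hPneg α hα hmax Rpα hRpα β γ
end

section
/- In Joyce's construction, let R_j⁺ = {γ ∈ Θ_{j-1} ∩ R⁺ : (α_j, γ) > 0} for j ≥ 1 (with R_1⁺ = {γ ∈ R⁺ : (α_1, γ) ≠ 0}). If α ∈ R_j⁺ and β ∈ R_l⁺ with l ≥ j and α + β is a root, then α + β ∈ R_j⁺. -/
open scoped RealInnerProductSpace

/-!
Each `Θ k` is cut out of `R` by the linear conditions `⟪α i, γ⟫ = 0` for `i ≤ k`, so it is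
closed under sums lying in `R`, and the `Θ k` decrease; thus `a + b ∈ Θ (j - 1)`. Moreover
`⟪α j, a⟫ > 0`, while `⟪α j, b⟫` is positive for `l = j` and zero for `l > j` (then
`b ∈ Θ j`), so `⟪α j, a + b⟫ > 0`. For `j = 1` positivity on `R_1⁺` comes from
`2 ⟪γ, α 1⟫ / ⟪α 1, α 1⟫ = 1`.
-/

section

variable {E : Type*} [NormedAddCommGroup E] [InnerProductSpace ℝ E]

/-- For `y ≠ x` the hypothesis forces `⟪x, x⟫ ≠ 0` (as `t / 0 = 0`), hence
`⟪x, y⟫ = ⟪x, x⟫ / 2`. -/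
theorem real_inner_pos_of_two_mul_inner_div_eq_one {x y : E} (hxy : ⟪x, y⟫ ≠ 0)
    (h : y ≠ x → 2 * ⟪y, x⟫ / ⟪x, x⟫ = 1) : 0 < ⟪x, y⟫ := by
  by_cases hyx : y = x
  · subst hyx
    exact lt_of_le_of_ne real_inner_self_nonneg hxy.symm
  · have hratio := h hyx
    have hx : ⟪x, x⟫ ≠ 0 := by
      rintro hx
      rw [hx, div_zero] at hratio
      exact zero_ne_one hratio
    have hxpos : 0 < ⟪x, x⟫ := lt_of_le_of_ne real_inner_self_nonneg hx.symm
    rw [div_eq_one_iff_eq hx] at hratio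
    rw [real_inner_comm]
    linarith

def IsOrthogonalChain (R : Finset E) (α : ℕ → E) (d : ℕ) (Θ : ℕ → Finset E) : Prop :=
  Θ 0 = R ∧ ∀ j, 1 ≤ j → j ≤ d → Θ j = (Θ (j - 1)).filter (fun γ => ⟪α j, γ⟫ = 0)

namespace IsOrthogonalChain

variable {R : Finset E} {α : ℕ → E} {d : ℕ} {Θ : ℕ → Finset E}

theorem mem_iff (hΘ : IsOrthogonalChain R α d Θ) {k : ℕ} (hk : k ≤ d) {γ : E} :
    γ ∈ Θ k ↔ γ ∈ R ∧ ∀ i, 1 ≤ i → i ≤ k → ⟪α i, γ⟫ = 0 := by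
  induction k with
  | zero =>
    rw [hΘ.1]
    exact ⟨fun hγ => ⟨hγ, fun _ hi hi0 => by omega⟩, And.left⟩
  | succ k ih =>
    rw [hΘ.2 (k + 1) k.succ_pos hk, Finset.mem_filter, Nat.add_sub_cancel, ih (by omega)]
    constructor
    · rintro ⟨⟨hγR, hγ⟩, hγk⟩
      refine ⟨hγR, fun i hi hik => ?_⟩
      rcases Nat.le_succ_iff.mp hik with hik | rfl
      exacts [hγ i hi hik, hγk]
    · rintro ⟨hγR, hγ⟩
      exact ⟨⟨hγR, fun i hi hik => hγ i hi (by omega)⟩, hγ (k + 1) k.succ_pos le_rfl⟩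

theorem inner_eq_zero (hΘ : IsOrthogonalChain R α d Θ) {i k : ℕ} (hi : 1 ≤ i) (hik : i ≤ k)
    (hkd : k ≤ d) {γ : E} (hγ : γ ∈ Θ k) : ⟪α i, γ⟫ = 0 :=
  ((hΘ.mem_iff hkd).1 hγ).2 i hi hik

theorem mem_of_le (hΘ : IsOrthogonalChain R α d Θ) {k m : ℕ} (hkm : k ≤ m) (hmd : m ≤ d)
    {γ : E} (hγ : γ ∈ Θ m) : γ ∈ Θ k :=
  (hΘ.mem_iff (hkm.trans hmd)).2
    ⟨((hΘ.mem_iff hmd).1 hγ).1, fun _ hi hik => hΘ.inner_eq_zero hi (hik.trans hkm) hmd hγ⟩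

theorem add_mem (hΘ : IsOrthogonalChain R α d Θ) {k : ℕ} (hkd : k ≤ d) {a b : E}
    (ha : a ∈ Θ k) (hb : b ∈ Θ k) (hab : a + b ∈ R) : a + b ∈ Θ k :=
  (hΘ.mem_iff hkd).2 ⟨hab, fun i hi hik => by
    rw [inner_add_right, hΘ.inner_eq_zero hi hik hkd ha, hΘ.inner_eq_zero hi hik hkd hb,
      add_zero]⟩

end IsOrthogonalChain

variable [DecidableEq E] {P : Finset E} {α : ℕ → E} {Θ : ℕ → Finset E} {d : ℕ}
  {Rp : ℕ → Finset E}

theorem mem_of_mem_joyceSet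
    (hRp1 : Rp 1 = P.filter (fun γ => ⟪α 1, γ⟫ ≠ 0))
    (hRp : ∀ j, 2 ≤ j → j ≤ d → Rp j = ((Θ (j - 1)) ∩ P).filter (fun γ => 0 < ⟪α j, γ⟫))
    {k : ℕ} (hk1 : 1 ≤ k) (hkd : k ≤ d) {γ : E} (hγ : γ ∈ Rp k) : γ ∈ P := by
  rcases hk1.eq_or_lt with rfl | hk2
  · rw [hRp1, Finset.mem_filter] at hγ
    exact hγ.1
  · rw [hRp k hk2 hkd, Finset.mem_filter, Finset.mem_inter] at hγ
    exact hγ.1.2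

theorem mem_chain_of_mem_joyceSet
    (hRp : ∀ j, 2 ≤ j → j ≤ d → Rp j = ((Θ (j - 1)) ∩ P).filter (fun γ => 0 < ⟪α j, γ⟫))
    {k : ℕ} (hk2 : 2 ≤ k) (hkd : k ≤ d) {γ : E} (hγ : γ ∈ Rp k) : γ ∈ Θ (k - 1) := by
  rw [hRp k hk2 hkd, Finset.mem_filter, Finset.mem_inter] at hγ
  exact hγ.1.1

theorem real_inner_pos_of_mem_joyceSet
    (hRp1 : Rp 1 = P.filter (fun γ => ⟪α 1, γ⟫ ≠ 0))
    (hRp : ∀ j, 2 ≤ j → j ≤ d → Rp j = ((Θ (j - 1)) ∩ P).filter (fun γ => 0 < ⟪α j, γ⟫))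
    (hhalf : ∀ γ ∈ Rp 1, γ ≠ α 1 → 2 * ⟪γ, α 1⟫ / ⟪α 1, α 1⟫ = 1)
    {k : ℕ} (hk1 : 1 ≤ k) (hkd : k ≤ d) {γ : E} (hγ : γ ∈ Rp k) : 0 < ⟪α k, γ⟫ := by
  rcases hk1.eq_or_lt with rfl | hk2
  · have hγ1 := hγ
    rw [hRp1, Finset.mem_filter] at hγ1
    exact real_inner_pos_of_two_mul_inner_div_eq_one hγ1.2 (hhalf γ hγ)
  · rw [hRp k hk2 hkd, Finset.mem_filter] at hγ
    exact hγ.2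

end

theorem stmt_10_general (E : Type*) [NormedAddCommGroup E] [InnerProductSpace ℝ E]
    [DecidableEq E]
    (R : Finset E)
    (P : Finset E)
    (hPadd : ∀ β ∈ P, ∀ γ ∈ P, β + γ ∈ R → β + γ ∈ P)
    -- Joyce recursion data
    (d : ℕ) (α : ℕ → E) (Θ : ℕ → Finset E)
    (hΘ0 : Θ 0 = R)
    (hΘ : ∀ j, 1 ≤ j → j ≤ d →
      Θ j = (Θ (j - 1)).filter (fun γ => ⟪α j, γ⟫ = 0))
    (Rp : ℕ → Finset E)
    (hRp1 : Rp 1 = P.filter (fun γ => ⟪α 1, γ⟫ ≠ 0))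
    (hRp : ∀ j, 2 ≤ j → j ≤ d →
      Rp j = ((Θ (j - 1)) ∩ P).filter (fun γ => 0 < ⟪α j, γ⟫))
    -- key facts from the construction
    (hhalf : ∀ j, 1 ≤ j → j ≤ d → ∀ γ ∈ Rp j, γ ≠ α j →
      2 * ⟪γ, α j⟫ / ⟪α j, α j⟫ = 1) :
    ∀ j l, 1 ≤ j → j ≤ l → l ≤ d →
      ∀ a ∈ Rp j, ∀ b ∈ Rp l, a + b ∈ R → a + b ∈ Rp j := by
  intro j l hj hjl hld a ha b hb hab
  have hjd : j ≤ d := hjl.trans hld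
  have hchain : IsOrthogonalChain R α d Θ := ⟨hΘ0, hΘ⟩
  have hpos {k : ℕ} (hk1 : 1 ≤ k) (hkd : k ≤ d) {γ : E} (hγ : γ ∈ Rp k) : 0 < ⟪α k, γ⟫ :=
    real_inner_pos_of_mem_joyceSet hRp1 hRp (hhalf 1 le_rfl (hj.trans hjd)) hk1 hkd hγ
  have hb_nonneg : 0 ≤ ⟪α j, b⟫ := by
    rcases hjl.eq_or_lt with rfl | hlt
    · exact (hpos hj hjd hb).le
    · exact (hchain.inner_eq_zero hj (by omega) (by omega)
        (mem_chain_of_mem_joyceSet hRp (by omega) hld hb)).ge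
  have hab_pos : 0 < ⟪α j, a + b⟫ := by
    rw [inner_add_right]
    linarith [hpos hj hjd ha]
  have habP : a + b ∈ P := hPadd a (mem_of_mem_joyceSet hRp1 hRp hj hjd ha) b
    (mem_of_mem_joyceSet hRp1 hRp (hj.trans hjl) hld hb) hab
  rcases hj.eq_or_lt with rfl | hj2
  · rw [hRp1, Finset.mem_filter]
    exact ⟨habP, hab_pos.ne'⟩
  · have haΘ := mem_chain_of_mem_joyceSet hRp hj2 hjd ha
    have hbΘ : b ∈ Θ (j - 1) :=
      hchain.mem_of_le (by omega) (by omega) (mem_chain_of_mem_joyceSet hRp (by omega) hld hb)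
    rw [hRp j hj2 hjd, Finset.mem_filter, Finset.mem_inter]
    exact ⟨⟨hchain.add_mem (by omega) haΘ hbΘ hab, habP⟩, hab_pos⟩

/-- With Joyce's sets `R_j⁺` (`R_1⁺ = {γ ∈ R⁺ : (α_1,γ) ≠ 0}` and
`R_j⁺ = {γ ∈ Θ_{j-1} ∩ R⁺ : (α_j,γ) > 0}` for `j ≥ 2`), if `α ∈ R_j⁺`,
`β ∈ R_l⁺` with `l ≥ j` and `α + β` is a root, then `α + β ∈ R_j⁺`. -/
theorem stmt_10 (E : Type*) [NormedAddCommGroup E] [InnerProductSpace ℝ E]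
    [DecidableEq E]
    (R : Finset E)
    (hR0 : (0 : E) ∉ R)
    (hRneg : ∀ β ∈ R, -β ∈ R)
    (hRint : ∀ α ∈ R, ∀ β ∈ R, ∃ n : ℤ, 2 * ⟪β, α⟫ / ⟪α, α⟫ = (n : ℝ))
    (hRrefl : ∀ α ∈ R, ∀ β ∈ R, β - (2 * ⟪β, α⟫ / ⟪α, α⟫) • α ∈ R)
    (hRred : ∀ α ∈ R, ∀ t : ℝ, t • α ∈ R → t = 1 ∨ t = -1)
    (P : Finset E) (hPR : P ⊆ R)
    (hPneg : ∀ β ∈ R, (β ∈ P ↔ -β ∉ P))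
    (hPadd : ∀ β ∈ P, ∀ γ ∈ P, β + γ ∈ R → β + γ ∈ P)
    -- Joyce recursion data
    (d : ℕ) (α : ℕ → E) (Θ : ℕ → Finset E)
    (hΘ0 : Θ 0 = R)
    (hΘ : ∀ j, 1 ≤ j → j ≤ d →
      Θ j = (Θ (j - 1)).filter (fun γ => ⟪α j, γ⟫ = 0))
    (hαmem : ∀ j, 1 ≤ j → j ≤ d → α j ∈ Θ (j - 1) ∧ α j ∈ P)
    (hαmax : ∀ j, 1 ≤ j → j ≤ d → ∀ γ ∈ Θ (j - 1), γ ∈ P → α j + γ ∉ R)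
    (Rp : ℕ → Finset E)
    (hRp1 : Rp 1 = P.filter (fun γ => ⟪α 1, γ⟫ ≠ 0))
    (hRp : ∀ j, 2 ≤ j → j ≤ d →
      Rp j = ((Θ (j - 1)) ∩ P).filter (fun γ => 0 < ⟪α j, γ⟫))
    -- key facts from the construction
    (hhalf : ∀ j, 1 ≤ j → j ≤ d → ∀ γ ∈ Rp j, γ ≠ α j →
      2 * ⟪γ, α j⟫ / ⟪α j, α j⟫ = 1)
    (hso : ∀ i j, 1 ≤ i → i ≤ d → 1 ≤ j → j ≤ d → i ≠ j →
      α i + α j ∉ R ∧ α i + α j ≠ 0 ∧ α i - α j ∉ R ∧ α i - α j ≠ 0) :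
    ∀ j l, 1 ≤ j → j ≤ l → l ≤ d →
      ∀ a ∈ Rp j, ∀ b ∈ Rp l, a + b ∈ R → a + b ∈ Rp j :=
  stmt_10_general E R P hPadd d α Θ hΘ0 hΘ Rp hRp1 hRp hhalf
end

section
/- Let R be a root system, {α_j} Joyce strongly orthogonal roots, and δ̂ = (1/2) Σ_{α ∈ R̂⁺} α where R̂⁺ = ∪_{j=1}^m R_j⁺. Then for each j ≤ m, (α_j, δ̂) = (1/2) Σ_{γ ∈ R_j⁺} (α_j, γ) = ((α_j,α_j)/4)(2 + #(R_j⁺) - 1), and in particular (α_j, δ̂) > 0. Moreover Σ_{γ ∈ R_k⁺} (α_j, γ) = 0 for all k < j. -/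
open scoped RealInnerProductSpace

/-!
Inside a layer `R_k⁺` the roots `γ` and `α_k - γ` pair off, and for `k ≠ j` their inner products
with `α_j` add up to `(α_j, α_k) = 0`; so only the layer `R_j⁺` contributes to `(α_j, δ̂)`, and there
`α_j` contributes `(α_j, α_j)` while each of the other `#R_j⁺ - 1` roots contributes half of it.
-/

open Finset

/-- Terms with `f x = 0` are left fixed by the pairing; this covers `x = a` and `x = 0`, the only
points whose partner `a - x` might lie outside `s`. -/
theorem Finset.sum_map_eq_zero_of_sub_mem {G M : Type*} [AddCommGroup G] [AddCommGroup M]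
    [IsAddTorsionFree M] (f : G →+ M) {s : Finset G} {a : G} (hfa : f a = 0)
    (hs : ∀ x ∈ s, x ≠ a → a - x ∈ s) : ∑ x ∈ s, f x = 0 := by
  classical
  have hpair : ∀ x, f x + f (a - x) = 0 := fun x => by rw [map_sub, hfa]; abel
  refine sum_involution (fun x _ => if f x = 0 then x else a - x) ?_ ?_ ?_ ?_
  · intro x _
    split_ifs with hx
    · simp [hx]
    · exact hpair x
  · intro x _ hx hfix
    rw [if_neg hx] at hfix
    have : 2 • f x = 0 := by rw [two_nsmul]; simpa [hfix] using hpair x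
    exact hx (two_nsmul_eq_zero.mp this)
  · intro x hxs
    split_ifs with hx
    · exact hxs
    · exact hs x hxs fun hxa => hx (hxa ▸ hfa)
  · intro x _
    split_ifs with hx hx'
    · rfl
    · exact absurd (by simpa [hx'] using hpair x) hx
    · simp

theorem Finset.sum_eq_half_mul_card_add_one {ι K : Type*} [DecidableEq ι] [Field K] [CharZero K]
    {s : Finset ι} {a : ι} {f : ι → K} (ha : a ∈ s) (h : ∀ i ∈ s, i ≠ a → f i = f a / 2) :
    ∑ i ∈ s, f i = f a / 2 * (#s + 1) := by
  rw [← add_sum_erase s f ha,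
    sum_congr rfl fun i hi => h i (mem_of_mem_erase hi) (ne_of_mem_erase hi), sum_const,
    card_erase_of_mem ha, nsmul_eq_mul, Nat.cast_pred (card_pos.mpr ⟨a, ha⟩)]
  ring

theorem stmt_15_general (E : Type*) [NormedAddCommGroup E] [InnerProductSpace ℝ E]
    [DecidableEq E]
    -- Joyce data: strongly orthogonal roots `α j` and layers `Rp j`, `j = 1, …, m`
    (m : ℕ) (α : ℕ → E) (Rp : ℕ → Finset E)
    (hαmem : ∀ j, 1 ≤ j → j ≤ m → α j ∈ Rp j)
    (hαnorm : ∀ j, 1 ≤ j → j ≤ m → 0 < ⟪α j, α j⟫)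
    (hso : ∀ i j, 1 ≤ i → i ≤ m → 1 ≤ j → j ≤ m → i ≠ j → ⟪α i, α j⟫ = 0)
    (hdisj : ∀ i j, 1 ≤ i → i ≤ m → 1 ≤ j → j ≤ m → i ≠ j →
      Disjoint (Rp i) (Rp j))
    (hhalf : ∀ j, 1 ≤ j → j ≤ m → ∀ γ ∈ Rp j, γ ≠ α j →
      ⟪α j, γ⟫ = ⟪α j, α j⟫ / 2)
    (hinv : ∀ k, 1 ≤ k → k ≤ m → ∀ γ ∈ Rp k, γ ≠ α k → α k - γ ∈ Rp k)
    (δhat : E)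
    (hδhat : δhat = (1/2 : ℝ) • ∑ γ ∈ (Finset.Icc 1 m).biUnion Rp, γ) :
    ∀ j, 1 ≤ j → j ≤ m →
      (⟪α j, δhat⟫ = (1/2 : ℝ) * ∑ γ ∈ Rp j, ⟪α j, γ⟫) ∧
      (⟪α j, δhat⟫ = (⟪α j, α j⟫ / 4) * (2 + ((Rp j).card : ℝ) - 1)) ∧
      0 < ⟪α j, δhat⟫ ∧
      (∀ k, 1 ≤ k → k < j → ∑ γ ∈ Rp k, ⟪α j, γ⟫ = 0) := by
  intro j hj hjm
  have hvanish : ∀ k ∈ Icc 1 m, k ≠ j → ∑ γ ∈ Rp k, ⟪α j, γ⟫ = 0 := by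
    intro k hk hkj
    obtain ⟨hk, hkm⟩ := mem_Icc.mp hk
    exact sum_map_eq_zero_of_sub_mem (innerₛₗ ℝ (α j)).toAddMonoidHom
      (hso j k hj hjm hk hkm hkj.symm) (hinv k hk hkm)
  have hδ : ⟪α j, δhat⟫ = (1/2 : ℝ) * ∑ γ ∈ Rp j, ⟪α j, γ⟫ := by
    have hpd : (Icc 1 m : Set ℕ).PairwiseDisjoint Rp := fun k hk l hl hkl => by
      simp only [coe_Icc, Set.mem_Icc] at hk hl
      exact hdisj k l hk.1 hk.2 hl.1 hl.2 hkl
    rw [hδhat, real_inner_smul_right, inner_sum, sum_biUnion hpd,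
      sum_eq_single_of_mem j (mem_Icc.mpr ⟨hj, hjm⟩) hvanish]
  have hsum := sum_eq_half_mul_card_add_one (hαmem j hj hjm) (hhalf j hj hjm)
  have hpos := hαnorm j hj hjm
  refine ⟨hδ, by rw [hδ, hsum]; ring, by rw [hδ, hsum]; positivity, fun k hk hkj => ?_⟩
  exact hvanish k (mem_Icc.mpr ⟨hk, hkj.le.trans hjm⟩) hkj.ne

/-- With `δ̂ = (1/2) Σ_{α ∈ R̂⁺} α`, `R̂⁺ = ∪_{j=1}^m R_j⁺`, for each
`j ≤ m` one has `(α_j, δ̂) = (1/2) Σ_{γ ∈ R_j⁺} (α_j,γ) = ((α_j,α_j)/4)(2 + #R_j⁺ - 1)`,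
which is positive, and `Σ_{γ ∈ R_k⁺} (α_j,γ) = 0` for `k < j`. -/
theorem stmt_15 (E : Type*) [NormedAddCommGroup E] [InnerProductSpace ℝ E]
    [DecidableEq E]
    (R : Finset E)
    (hR0 : (0 : E) ∉ R)
    (hRneg : ∀ β ∈ R, -β ∈ R)
    (P : Finset E) (hPR : P ⊆ R)
    (hPneg : ∀ β ∈ R, (β ∈ P ↔ -β ∉ P))
    (hPadd : ∀ β ∈ P, ∀ γ ∈ P, β + γ ∈ R → β + γ ∈ P)
    -- Joyce data: strongly orthogonal roots `α j` and layers `Rp j`, `j = 1, …, m`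
    (m : ℕ) (α : ℕ → E) (Rp : ℕ → Finset E)
    (hRpP : ∀ j, 1 ≤ j → j ≤ m → Rp j ⊆ P)
    (hαmem : ∀ j, 1 ≤ j → j ≤ m → α j ∈ Rp j)
    (hαnorm : ∀ j, 1 ≤ j → j ≤ m → 0 < ⟪α j, α j⟫)
    (hso : ∀ i j, 1 ≤ i → i ≤ m → 1 ≤ j → j ≤ m → i ≠ j → ⟪α i, α j⟫ = 0)
    (hdisj : ∀ i j, 1 ≤ i → i ≤ m → 1 ≤ j → j ≤ m → i ≠ j →
      Disjoint (Rp i) (Rp j))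
    (hhalf : ∀ j, 1 ≤ j → j ≤ m → ∀ γ ∈ Rp j, γ ≠ α j →
      ⟪α j, γ⟫ = ⟪α j, α j⟫ / 2)
    (hinv : ∀ k, 1 ≤ k → k ≤ m → ∀ γ ∈ Rp k, γ ≠ α k → α k - γ ∈ Rp k)
    (horth : ∀ j k, 1 ≤ k → k < j → j ≤ m → ∀ γ ∈ Rp k, ⟪α j, α k - γ⟫ = -⟪α j, γ⟫)
    (δhat : E)
    (hδhat : δhat = (1/2 : ℝ) • ∑ γ ∈ (Finset.Icc 1 m).biUnion Rp, γ) :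
    ∀ j, 1 ≤ j → j ≤ m →
      (⟪α j, δhat⟫ = (1/2 : ℝ) * ∑ γ ∈ Rp j, ⟪α j, γ⟫) ∧
      (⟪α j, δhat⟫ = (⟪α j, α j⟫ / 4) * (2 + ((Rp j).card : ℝ) - 1)) ∧
      0 < ⟪α j, δhat⟫ ∧
      (∀ k, 1 ≤ k → k < j → ∑ γ ∈ Rp k, ⟪α j, γ⟫ = 0) :=
  stmt_15_general E m α Rp hαmem hαnorm hso hdisj hhalf hinv δhat hδhat
end
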